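/- arXiv:2412.12899 — 3 statements merged into one kernel-verified Lean document; each statement's English description precedes it below -/
import Mathlib

section
/- The oriented distance function φ_C is a convex function on ℝ^m. -/
open Metric Set

set_option linter.unusedSectionVars false

section Aux

variable {E : Type*} [NormedAddCommGroup E] [NormedSpace ℝ E]

/-- The signed (oriented) distance to a set `A`. -/
noncomputable def sdAux (A : Set E) (x : E) : ℝ := infDist x A - infDist x Aᶜ

lemma sdAux_le_of_mem_dist {A : Set E} {x a : E} {r : ℝ} (ha : a ∈ A) (hd : dist x a ≤ r) :
    sdAux A x ≤ r := by
  have h1 : infDist x A ≤ r := le_trans (infDist_le_dist_of_mem ha) hd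
  have h2 : 0 ≤ infDist x Aᶜ := infDist_nonneg
  unfold sdAux; linarith

lemma sdAux_le_nonneg_iff [ProperSpace E] {A : Set E} (hA : IsClosed A) (hne : A.Nonempty)
    {r : ℝ} (hr : 0 ≤ r) {x : E} :
    sdAux A x ≤ r ↔ ∃ a ∈ A, dist x a ≤ r := by
  constructor
  · intro h
    by_cases hx : x ∈ A
    · exact ⟨x, hx, by simpa using hr⟩
    · have h0 : infDist x Aᶜ = 0 := infDist_zero_of_mem hx
      have hle : infDist x A ≤ r := by unfold sdAux at h; linarith
      obtain ⟨a, ha, hda⟩ := hA.exists_infDist_eq_dist hne x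
      exact ⟨a, ha, by rw [← hda]; exact hle⟩
  · rintro ⟨a, ha, hd⟩
    exact sdAux_le_of_mem_dist ha hd

lemma sdAux_le_neg_iff {A : Set E} (hA : IsClosed A) (hne : Aᶜ.Nonempty)
    {r : ℝ} (hr : r < 0) {x : E} :
    sdAux A x ≤ r ↔ ∀ u : E, dist u x ≤ -r → u ∈ A := by
  constructor
  · intro h u hu
    have hx : x ∈ A := by
      by_contra hx
      have h0 : infDist x Aᶜ = 0 := infDist_zero_of_mem hx
      have h1 : 0 ≤ infDist x A := infDist_nonneg
      unfold sdAux at h; linarith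
    have h0 : infDist x A = 0 := infDist_zero_of_mem hx
    have h2 : -r ≤ infDist x Aᶜ := by unfold sdAux at h; linarith
    have hball : ball x (-r) ⊆ A := by
      intro z hz
      by_contra hzA
      have : infDist x Aᶜ ≤ dist x z := infDist_le_dist_of_mem hzA
      rw [dist_comm] at this
      exact absurd (lt_of_le_of_lt this (mem_ball.1 hz)) (not_lt.2 h2)
    have hcb : closedBall x (-r) ⊆ A := by
      rw [← closure_ball x (by linarith : -r ≠ 0)]
      exact hA.closure_subset_iff.2 hball
    exact hcb (mem_closedBall.2 hu)
  · intro h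
    have hx : x ∈ A := h x (by simp; linarith)
    have h0 : infDist x A = 0 := infDist_zero_of_mem hx
    have h2 : -r ≤ infDist x Aᶜ := by
      refine le_of_not_gt fun hlt => ?_
      obtain ⟨z, hz, hdz⟩ := (infDist_lt_iff hne).1 hlt
      exact hz (h z (by rw [dist_comm]; linarith))
    unfold sdAux; linarith

lemma sdAux_mixed [ProperSpace E] {A : Set E} (hA : IsClosed A) (hconv : Convex ℝ A)
    (hne : A.Nonempty) (hne' : Aᶜ.Nonempty) {x1 x2 : E} {t s r1 r2 : ℝ}
    (ht : 0 < t) (hs : 0 < s) (hts : t + s = 1)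
    (h1 : sdAux A x1 ≤ r1) (h2 : sdAux A x2 ≤ r2) (hr1 : r1 < 0) (hr2 : 0 ≤ r2) :
    sdAux A (t • x1 + s • x2) ≤ t * r1 + s * r2 := by
  have H1 : ∀ u : E, dist u x1 ≤ -r1 → u ∈ A := (sdAux_le_neg_iff hA hne' hr1).1 h1
  obtain ⟨a2, ha2, hd2⟩ := (sdAux_le_nonneg_iff hA hne hr2).1 h2
  set w : E := x2 - a2 with hw_def
  have hw : ‖w‖ ≤ r2 := by rw [hw_def, ← dist_eq_norm]; exact hd2
  set x : E := t • x1 + s • x2 with hx_def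
  rcases le_or_gt 0 (t * r1 + s * r2) with hr | hr
  · refine (sdAux_le_nonneg_iff hA hne hr).2 ?_
    rcases le_or_gt (s * ‖w‖ + t * r1) 0 with hc | hc
    · have hu1 : x1 + (s / t) • w ∈ A := by
        refine H1 _ ?_
        rw [dist_eq_norm]
        have : x1 + (s / t) • w - x1 = (s / t) • w := by abel
        rw [this, norm_smul, Real.norm_eq_abs, abs_of_nonneg (by positivity)]
        rw [div_mul_eq_mul_div, div_le_iff₀ ht]
        nlinarith
      have hmem : t • (x1 + (s / t) • w) + s • a2 ∈ A := hconv hu1 ha2 ht.le hs.le hts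
      have heq : t • (x1 + (s / t) • w) + s • a2 = x := by
        rw [hx_def, hw_def]
        rw [smul_add, smul_smul, mul_div_cancel₀ _ ht.ne']
        rw [smul_sub]
        abel
      exact ⟨x, heq ▸ hmem, by simpa using hr⟩
    · have hwne : w ≠ 0 := by
        intro h0
        rw [h0, norm_zero, mul_zero] at hc
        nlinarith
      have hwpos : 0 < ‖w‖ := norm_pos_iff.2 hwne
      set wh : E := ‖w‖⁻¹ • w with hwh_def
      have hwhn : ‖wh‖ = 1 := by
        rw [hwh_def, norm_smul, Real.norm_eq_abs, abs_of_nonneg (by positivity),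
          inv_mul_cancel₀ hwpos.ne']
      have hu1 : x1 + (-r1) • wh ∈ A := by
        refine H1 _ ?_
        rw [dist_eq_norm]
        have : x1 + (-r1) • wh - x1 = (-r1) • wh := by abel
        rw [this, norm_smul, Real.norm_eq_abs, hwhn, mul_one, abs_of_nonneg (by linarith)]
      set a : E := t • (x1 + (-r1) • wh) + s • a2 with ha_def
      have hmem : a ∈ A := hconv hu1 ha2 ht.le hs.le hts
      refine ⟨a, hmem, ?_⟩
      have hxa : x - a = (s * ‖w‖ + t * r1) • wh := by
        rw [hx_def, ha_def, hwh_def]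
        have hsw : s • x2 = s • a2 + (s * ‖w‖) • (‖w‖⁻¹ • w) := by
          rw [smul_smul, mul_assoc, mul_inv_cancel₀ hwpos.ne', mul_one, hw_def, smul_sub]
          abel
        rw [hsw]
        rw [smul_add, smul_smul, smul_smul, smul_smul, add_smul]
        ring_nf
        module
      rw [dist_eq_norm, hxa, norm_smul, Real.norm_eq_abs, hwhn, mul_one,
        abs_of_nonneg hc.le]
      nlinarith
  · refine (sdAux_le_neg_iff hA hne' hr).2 ?_
    intro u hu
    have hnorm : ‖s • w + (u - x)‖ ≤ -(t * r1) := by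
      calc ‖s • w + (u - x)‖ ≤ ‖s • w‖ + ‖u - x‖ := norm_add_le _ _
        _ ≤ s * r2 + -(t * r1 + s * r2) := by
            refine add_le_add ?_ ?_
            · rw [norm_smul, Real.norm_eq_abs, abs_of_nonneg hs.le]
              nlinarith
            · rw [← dist_eq_norm]; linarith [hu]
        _ = -(t * r1) := by ring
    have hu1 : x1 + t⁻¹ • (s • w + (u - x)) ∈ A := by
      refine H1 _ ?_
      rw [dist_eq_norm]
      have : x1 + t⁻¹ • (s • w + (u - x)) - x1 = t⁻¹ • (s • w + (u - x)) := by abel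
      rw [this, norm_smul, Real.norm_eq_abs, abs_of_nonneg (by positivity)]
      rw [inv_mul_le_iff₀ ht]
      nlinarith [hnorm]
    have heq : t • (x1 + t⁻¹ • (s • w + (u - x))) + s • a2 = u := by
      rw [smul_add, smul_smul, mul_inv_cancel₀ ht.ne', one_smul, hx_def, hw_def]
      rw [smul_sub]
      abel
    exact heq ▸ hconv hu1 ha2 ht.le hs.le hts

lemma sdAux_convexOn [ProperSpace E] {A : Set E} (hA : IsClosed A) (hconv : Convex ℝ A)
    (hne : A.Nonempty) (hne' : Aᶜ.Nonempty) :
    ConvexOn ℝ Set.univ (sdAux A) := by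
  refine ⟨convex_univ, fun x1 _ x2 _ t s ht hs hts => ?_⟩
  rcases ht.eq_or_lt with h0 | ht'
  · have hs1 : s = 1 := by linarith
    subst hs1; rw [← h0]; simp
  rcases hs.eq_or_lt with h0 | hs'
  · have ht1 : t = 1 := by linarith
    subst ht1; rw [← h0]; simp
  simp only [smul_eq_mul]
  rcases lt_or_ge (sdAux A x1) 0 with h1 | h1 <;> rcases lt_or_ge (sdAux A x2) 0 with h2 | h2
  · -- both negative
    set r1 := sdAux A x1 with hr1_def
    set r2 := sdAux A x2 with hr2_def
    have hrneg : t * r1 + s * r2 < 0 := by nlinarith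
    have hne0 : t * r1 + s * r2 ≠ 0 := hrneg.ne
    have H1 : ∀ u : E, dist u x1 ≤ -r1 → u ∈ A := (sdAux_le_neg_iff hA hne' h1).1 le_rfl
    have H2 : ∀ u : E, dist u x2 ≤ -r2 → u ∈ A := (sdAux_le_neg_iff hA hne' h2).1 le_rfl
    refine (sdAux_le_neg_iff hA hne' hrneg).2 ?_
    intro u hu
    have hku : ‖u - (t • x1 + s • x2)‖ ≤ -(t * r1 + s * r2) := by
      rw [← dist_eq_norm]; exact hu
    have key : ∀ (xi : E) (ri : ℝ), ri < 0 →
        dist (xi + (ri / (t * r1 + s * r2)) • (u - (t • x1 + s • x2))) xi ≤ -ri := by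
      intro xi ri hri
      rw [dist_eq_norm]
      have e : xi + (ri / (t * r1 + s * r2)) • (u - (t • x1 + s • x2)) - xi
          = (ri / (t * r1 + s * r2)) • (u - (t • x1 + s • x2)) := by abel
      rw [e, norm_smul, Real.norm_eq_abs, abs_div, abs_of_neg hri, abs_of_neg hrneg]
      rw [div_mul_eq_mul_div, div_le_iff₀ (by linarith : (0:ℝ) < -(t * r1 + s * r2))]
      nlinarith [mul_le_mul_of_nonneg_left hku (by linarith : (0:ℝ) ≤ -ri)]
    have hu1 : x1 + (r1 / (t * r1 + s * r2)) • (u - (t • x1 + s • x2)) ∈ A :=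
      H1 _ (key x1 r1 h1)
    have hu2 : x2 + (r2 / (t * r1 + s * r2)) • (u - (t • x1 + s • x2)) ∈ A :=
      H2 _ (key x2 r2 h2)
    have heq : t • (x1 + (r1 / (t * r1 + s * r2)) • (u - (t • x1 + s • x2)))
        + s • (x2 + (r2 / (t * r1 + s * r2)) • (u - (t • x1 + s • x2))) = u := by
      match_scalars <;> field_simp <;> ring
    exact heq ▸ hconv hu1 hu2 ht'.le hs'.le hts
  · exact sdAux_mixed hA hconv hne hne' ht' hs' hts le_rfl le_rfl h1 h2
  · have h := sdAux_mixed hA hconv hne hne' hs' ht' (by linarith) le_rfl le_rfl h2 h1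
    calc sdAux A (t • x1 + s • x2) = sdAux A (s • x2 + t • x1) := by rw [add_comm]
      _ ≤ s * sdAux A x2 + t * sdAux A x1 := h
      _ = t * sdAux A x1 + s * sdAux A x2 := by ring
  · -- both nonnegative
    obtain ⟨a1, ha1, hd1⟩ := (sdAux_le_nonneg_iff hA hne h1).1 le_rfl
    obtain ⟨a2, ha2, hd2⟩ := (sdAux_le_nonneg_iff hA hne h2).1 le_rfl
    have hmem : t • a1 + s • a2 ∈ A := hconv ha1 ha2 ht'.le hs'.le hts
    refine sdAux_le_of_mem_dist hmem ?_
    rw [dist_eq_norm]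
    have e : t • x1 + s • x2 - (t • a1 + s • a2) = t • (x1 - a1) + s • (x2 - a2) := by
      rw [smul_sub, smul_sub]; abel
    rw [e]
    calc ‖t • (x1 - a1) + s • (x2 - a2)‖ ≤ ‖t • (x1 - a1)‖ + ‖s • (x2 - a2)‖ := norm_add_le _ _
      _ ≤ t * sdAux A x1 + s * sdAux A x2 := by
          refine add_le_add ?_ ?_
          · rw [norm_smul, Real.norm_eq_abs, abs_of_nonneg ht'.le, ← dist_eq_norm]
            exact mul_le_mul_of_nonneg_left hd1 ht'.le
          · rw [norm_smul, Real.norm_eq_abs, abs_of_nonneg hs'.le, ← dist_eq_norm]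
            exact mul_le_mul_of_nonneg_left hd2 hs'.le

end Aux

/-- The oriented distance function associated with the cone `C`:
`φ_C(y) = d(y, -C) - d(y, ℝ^m \\ (-C))`. -/
noncomputable def phiC {m : ℕ} (C : Set (EuclideanSpace ℝ (Fin m)))
    (y : EuclideanSpace ℝ (Fin m)) : ℝ :=
  Metric.infDist y (-C) - Metric.infDist y ((-C)ᶜ)

theorem phiC_convex {m : ℕ} (C : Set (EuclideanSpace ℝ (Fin m)))
    (hclosed : IsClosed C) (hconv : Convex ℝ C)
    (hcone : ∀ a ∈ C, ∀ l : ℝ, 0 ≤ l → l • a ∈ C)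
    (hpointed : C ∩ (-C) = {0})
    (hint : (interior C).Nonempty) :
    ConvexOn ℝ Set.univ (phiC C) := by
  obtain ⟨x0, hx0⟩ := hint
  have hx0C : x0 ∈ C := interior_subset hx0
  by_cases hcompl : ((-C : Set (EuclideanSpace ℝ (Fin m)))ᶜ).Nonempty
  · have hphi : phiC C = sdAux (-C) := rfl
    rw [hphi]
    exact sdAux_convexOn hclosed.neg hconv.neg ⟨-x0, by simpa using hx0C⟩ hcompl
  · have huniv : (-C : Set (EuclideanSpace ℝ (Fin m))) = univ := by
      rw [not_nonempty_iff_eq_empty, compl_empty_iff] at hcompl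
      exact hcompl
    have hphi : phiC C = fun _ => (0 : ℝ) := by
      funext y
      unfold phiC
      rw [huniv, compl_univ, infDist_empty, infDist_zero_of_mem (mem_univ y), sub_zero]
    rw [hphi]
    exact convexOn_const 0 convex_univ
end

section
/- Let z ∈ Ω with θ(z) < 0, let s(z) ∈ Ω be a minimizer of s ↦ φ_C(JV(z)(s − z)) over Ω, and set d(z) = s(z) − z. Then for every β ∈ (0,1) there exists t̂ ∈ (0,1] such that for all t ∈ (0, t̂], V(z) + β·t·JV(z)(d(z)) − V(z + t·d(z)) ∈ int C. -/
open Metric Set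

/-- The optimal value `θ(z) = min_{s ∈ Ω} φ_C (JV(z)(s - z))`. -/
noncomputable def theta {m n : ℕ} (C : Set (EuclideanSpace ℝ (Fin m)))
    (Ω : Set (EuclideanSpace ℝ (Fin n)))
    (V : EuclideanSpace ℝ (Fin n) → EuclideanSpace ℝ (Fin m))
    (z : EuclideanSpace ℝ (Fin n)) : ℝ :=
  sInf ((fun s => phiC C (fderiv ℝ V z (s - z))) '' Ω)

/-! Since `s(z)` attains the minimum, `φ_C(JV(z) d) = θ(z) < 0`, which places `-JV(z) d`, and
hence `(1 - β)(-JV(z) d)`, in `int C`. The difference quotient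
`t⁻¹ (V z + β t JV(z) d - V (z + t d))` tends to `(β - 1) JV(z) d` as `t → 0⁺`, so it eventually
lies in the open set `int C`; multiplying back by `t > 0` stays in `int C` because `C` is a cone. -/

section

open Filter Topology Pointwise

theorem neg_mem_interior_of_phiC_neg {m : ℕ} {C : Set (EuclideanSpace ℝ (Fin m))}
    {y : EuclideanSpace ℝ (Fin m)} (hy : phiC C y < 0) : -y ∈ interior C := by
  have hpos : 0 < infDist y (-C)ᶜ := by
    have := infDist_nonneg (x := y) (s := -C)
    unfold phiC at hy
    linarith
  have hne : ((-C)ᶜ).Nonempty := by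
    by_contra h
    simp [not_nonempty_iff_eq_empty.mp h] at hpos
  have hy' : y ∈ interior (-C) := by
    simpa [closure_compl] using (infDist_pos_iff_notMem_closure hne).mpr hpos
  exact ((Homeomorph.neg _).preimage_interior C).symm.subst (motive := (y ∈ ·)) hy'

theorem smul_mem_interior_of_cone {F : Type*} [NormedAddCommGroup F] [NormedSpace ℝ F]
    {C : Set F} (hcone : ∀ a ∈ C, ∀ l : ℝ, 0 ≤ l → l • a ∈ C) {c : ℝ} (hc : 0 < c)
    {x : F} (hx : x ∈ interior C) : c • x ∈ interior C := by
  have hsub : c • C ⊆ C := by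
    rintro _ ⟨a, ha, rfl⟩
    exact hcone a ha c hc.le
  exact interior_mono hsub (by rw [interior_smul₀ hc.ne']; exact smul_mem_smul_set hx)

theorem eventually_armijo_mem_interior {E F : Type*} [NormedAddCommGroup E] [NormedSpace ℝ E]
    [NormedAddCommGroup F] [NormedSpace ℝ F] {C : Set F}
    (hcone : ∀ a ∈ C, ∀ l : ℝ, 0 ≤ l → l • a ∈ C) {f : E → F} {f' : E →L[ℝ] F} {z d : E}
    (hf : HasFDerivAt f f' z) {β : ℝ} (hdesc : (β - 1) • f' d ∈ interior C) :
    ∀ᶠ t in 𝓝[>] 0, f z + (β * t) • f' d - f (z + t • d) ∈ interior C := by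
  have hline : HasDerivAt (fun t : ℝ => f (z + t • d)) (f' d) 0 := by
    have hl : HasDerivAt (fun t : ℝ => z + t • d) d 0 := by
      simpa using ((hasDerivAt_id (0 : ℝ)).smul_const d).const_add z
    exact (by simpa using hf : HasFDerivAt f f' (z + (0 : ℝ) • d)).comp_hasDerivAt 0 hl
  have hslope : Tendsto (fun t : ℝ => t⁻¹ • (f z + (β * t) • f' d - f (z + t • d)))
      (𝓝[>] 0) (𝓝 ((β - 1) • f' d)) := by
    have h := (tendsto_const_nhds (x := β • f' d)).sub hline.tendsto_slope_zero_right
    rw [sub_smul, one_smul]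
    refine h.congr' ?_
    filter_upwards [self_mem_nhdsWithin] with t (ht : 0 < t)
    simp only [zero_add, zero_smul, add_zero]
    match_scalars <;> field_simp
  filter_upwards [hslope (isOpen_interior.mem_nhds hdesc), self_mem_nhdsWithin]
    with t ht (htpos : 0 < t)
  simpa [smul_smul, htpos.ne'] using smul_mem_interior_of_cone hcone htpos ht

theorem exists_Ioc_forall_of_eventually_nhdsGT {p : ℝ → Prop} (h : ∀ᶠ t in 𝓝[>] 0, p t) :
    ∃ a ∈ Ioc (0 : ℝ) 1, ∀ t ∈ Ioc 0 a, p t := by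
  obtain ⟨u, hu, hsub⟩ := mem_nhdsGT_iff_exists_Ioc_subset.mp h
  exact ⟨min 1 u, ⟨lt_min one_pos hu, min_le_left _ _⟩,
    fun t ht => hsub ⟨ht.1, ht.2.trans (min_le_right _ _)⟩⟩

end

theorem armijo_stepsize_exists_general {m n : ℕ}
    (C : Set (EuclideanSpace ℝ (Fin m)))
    (hcone : ∀ a ∈ C, ∀ l : ℝ, 0 ≤ l → l • a ∈ C)
    (Ω : Set (EuclideanSpace ℝ (Fin n)))
    (V : EuclideanSpace ℝ (Fin n) → EuclideanSpace ℝ (Fin m))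
    (hV : ContDiff ℝ 1 V)
    (z : EuclideanSpace ℝ (Fin n))
    (hθ : theta C Ω V z < 0)
    (sz : EuclideanSpace ℝ (Fin n)) (hsz : sz ∈ Ω)
    (hszmin : ∀ s ∈ Ω,
      phiC C (fderiv ℝ V z (sz - z)) ≤ phiC C (fderiv ℝ V z (s - z)))
    (β : ℝ) (hβ : β ∈ Set.Ioo (0:ℝ) 1) :
    ∃ that ∈ Set.Ioc (0:ℝ) 1, ∀ t ∈ Set.Ioc (0:ℝ) that,
      V z + (β * t) • (fderiv ℝ V z (sz - z)) - V (z + t • (sz - z)) ∈ interior C := by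
  have hleast : IsLeast ((fun s => phiC C (fderiv ℝ V z (s - z))) '' Ω)
      (phiC C (fderiv ℝ V z (sz - z))) :=
    ⟨mem_image_of_mem _ hsz, forall_mem_image.2 hszmin⟩
  have hdir : -fderiv ℝ V z (sz - z) ∈ interior C :=
    neg_mem_interior_of_phiC_neg (hleast.csInf_eq ▸ hθ)
  have hdesc : (β - 1) • fderiv ℝ V z (sz - z) ∈ interior C := by
    convert smul_mem_interior_of_cone hcone (sub_pos.2 hβ.2) hdir using 1
    module
  exact exists_Ioc_forall_of_eventually_nhdsGT <|
    eventually_armijo_mem_interior hcone (hV.differentiable one_ne_zero z).hasFDerivAt hdesc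

theorem armijo_stepsize_exists {m n : ℕ}
    (C : Set (EuclideanSpace ℝ (Fin m)))
    (hclosed : IsClosed C) (hconv : Convex ℝ C)
    (hcone : ∀ a ∈ C, ∀ l : ℝ, 0 ≤ l → l • a ∈ C)
    (hpointed : C ∩ (-C) = {0})
    (hint : (interior C).Nonempty)
    (Ω : Set (EuclideanSpace ℝ (Fin n)))
    (hΩne : Ω.Nonempty) (hΩcpt : IsCompact Ω) (hΩconv : Convex ℝ Ω)
    (V : EuclideanSpace ℝ (Fin n) → EuclideanSpace ℝ (Fin m))
    (hV : ContDiff ℝ 1 V)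
    (z : EuclideanSpace ℝ (Fin n)) (hz : z ∈ Ω)
    (hθ : theta C Ω V z < 0)
    (sz : EuclideanSpace ℝ (Fin n)) (hsz : sz ∈ Ω)
    (hszmin : ∀ s ∈ Ω,
      phiC C (fderiv ℝ V z (sz - z)) ≤ phiC C (fderiv ℝ V z (s - z)))
    (β : ℝ) (hβ : β ∈ Set.Ioo (0:ℝ) 1) :
    ∃ that ∈ Set.Ioc (0:ℝ) 1, ∀ t ∈ Set.Ioc (0:ℝ) that,
      V z + (β * t) • (fderiv ℝ V z (sz - z)) - V (z + t • (sz - z)) ∈ interior C :=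
  armijo_stepsize_exists_general C hcone Ω V hV z hθ sz hsz hszmin β hβ
end

section
/- The function θ : Ω → ℝ defined by θ(z) = min_{s ∈ Ω} φ_C(JV(z)(s − z)) is continuous on Ω. -/
open Metric Set

theorem continuous_phiC {m : ℕ} (C : Set (EuclideanSpace ℝ (Fin m))) :
    Continuous (phiC C) :=
  (continuous_infDist_pt _).sub (continuous_infDist_pt _)

theorem ContDiff.continuous_fderiv_apply_sub {𝕜 E F : Type*} [NontriviallyNormedField 𝕜]
    [NormedAddCommGroup E] [NormedSpace 𝕜 E] [NormedAddCommGroup F] [NormedSpace 𝕜 F]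
    {V : E → F} (hV : ContDiff 𝕜 1 V) :
    Continuous fun p : E × E => fderiv 𝕜 V p.1 (p.2 - p.1) :=
  ((hV.continuous_fderiv one_ne_zero).comp continuous_fst).clm_apply
    (continuous_snd.sub continuous_fst)

theorem continuous_theta {m n : ℕ} (C : Set (EuclideanSpace ℝ (Fin m)))
    {Ω : Set (EuclideanSpace ℝ (Fin n))} (hΩ : IsCompact Ω)
    {V : EuclideanSpace ℝ (Fin n) → EuclideanSpace ℝ (Fin m)} (hV : ContDiff ℝ 1 V) :
    Continuous (theta C Ω V) :=
  hΩ.continuous_sInf (f := fun z s => phiC C (fderiv ℝ V z (s - z)))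
    ((continuous_phiC C).comp hV.continuous_fderiv_apply_sub)

theorem theta_continuousOn_general {m n : ℕ}
    (C : Set (EuclideanSpace ℝ (Fin m)))
    (Ω : Set (EuclideanSpace ℝ (Fin n)))
    (hΩcpt : IsCompact Ω)
    (V : EuclideanSpace ℝ (Fin n) → EuclideanSpace ℝ (Fin m))
    (hV : ContDiff ℝ 1 V) :
    ContinuousOn (theta C Ω V) Ω :=
  (continuous_theta C hΩcpt hV).continuousOn

theorem theta_continuousOn {m n : ℕ}
    (C : Set (EuclideanSpace ℝ (Fin m)))
    (hclosed : IsClosed C) (hconv : Convex ℝ C)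
    (hcone : ∀ a ∈ C, ∀ l : ℝ, 0 ≤ l → l • a ∈ C)
    (hpointed : C ∩ (-C) = {0})
    (hint : (interior C).Nonempty)
    (Ω : Set (EuclideanSpace ℝ (Fin n)))
    (hΩne : Ω.Nonempty) (hΩcpt : IsCompact Ω) (hΩconv : Convex ℝ Ω)
    (V : EuclideanSpace ℝ (Fin n) → EuclideanSpace ℝ (Fin m))
    (hV : ContDiff ℝ 1 V) :
    ContinuousOn (theta C Ω V) Ω :=
  theta_continuousOn_general C Ω hΩcpt V hV
end
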